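/- arXiv:1604.06382 — 2 statements merged into one kernel-verified Lean document; each statement's English description precedes it below -/
import Mathlib

section
/- Let T' be a finite tree containing three distinct vertices a, b, v forming a path a–b–v, where a has degree 1 in T' and b has degree 2 in T', and let T be the tree obtained from T' by adding a new vertex u and the edge vu. Then γ₂(T) = γ₂(T') + 1 and α₂(T) = α₂(T') + 1; in particular α₂(T) − γ₂(T) = α₂(T') − γ₂(T'). -/
/-!
Adding the new leaf `u` to a 2-dominating set of `T'`, or deleting it from a 2-independent set
of `T`, gives `γ₂(T) ≤ γ₂(T') + 1` and `α₂(T) ≤ α₂(T') + 1` for any pendant vertex.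

The reverse bounds use the path `a – b – v`. A minimum 2-dominating set `S` of `T` contains the
leaves `u` and `a`, and contains `b` or `v` (otherwise `b` is dominated once); trading `b` for
`v` in `S - u` gives a 2-dominating set of `T'` of size at most `|S| - 1`. Dually, a
2-independent set `A` of `T'` cannot contain all of `a, b, v` (then `b` has two neighbours in
`A`), so replacing `A ∩ {a, b, v}` by `{a, b}` and adding `u` gives a 2-independent set of `T`
of size at least `|A| + 1`.
-/

open SimpleGraph

/-- `S` is a `k`-dominating set of the subgraph of `G` induced by `U`:
`S ⊆ U` and every vertex of `U` not in `S` has at least `k` neighbors in `S`. -/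
def IsKDomOn {V : Type*} (G : SimpleGraph V) (k : ℕ) (U S : Set V) : Prop :=
  S ⊆ U ∧ ∀ v ∈ U, v ∉ S → k ≤ (G.neighborSet v ∩ S).ncard

/-- `S` is a `k`-independent set of the subgraph of `G` induced by `U`:
`S ⊆ U` and every vertex of `S` has at most `k - 1` neighbors in `S`. -/
def IsKIndOn {V : Type*} (G : SimpleGraph V) (k : ℕ) (U S : Set V) : Prop :=
  S ⊆ U ∧ ∀ v ∈ S, (G.neighborSet v ∩ S).ncard ≤ k - 1

/-- The `k`-domination number of the subgraph of `G` induced by `U`. -/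
noncomputable def gammaK {V : Type*} (G : SimpleGraph V) (k : ℕ) (U : Set V) : ℕ :=
  sInf {n | ∃ S, IsKDomOn G k U S ∧ S.ncard = n}

/-- The `k`-independence number of the subgraph of `G` induced by `U`. -/
noncomputable def alphaK {V : Type*} (G : SimpleGraph V) (k : ℕ) (U : Set V) : ℕ :=
  sSup {n | ∃ S, IsKIndOn G k U S ∧ S.ncard = n}

section NumberBounds

variable {V : Type*} {G : SimpleGraph V} {k : ℕ} {U S : Set V}

theorem gammaK_le_ncard (h : IsKDomOn G k U S) : gammaK G k U ≤ S.ncard :=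
  Nat.sInf_le ⟨S, h, rfl⟩

theorem exists_isKDomOn_ncard_eq_gammaK (G : SimpleGraph V) (k : ℕ) (U : Set V) :
    ∃ S, IsKDomOn G k U S ∧ S.ncard = gammaK G k U :=
  Nat.sInf_mem (s := {n | ∃ S, IsKDomOn G k U S ∧ S.ncard = n})
    ⟨U.ncard, U, ⟨subset_rfl, fun _ hv hv' => absurd hv hv'⟩, rfl⟩

variable [Finite V]

theorem bddAbove_ncard_isKIndOn (G : SimpleGraph V) (k : ℕ) (U : Set V) :
    BddAbove {n | ∃ S, IsKIndOn G k U S ∧ S.ncard = n} := by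
  refine ⟨Nat.card V, ?_⟩
  rintro n ⟨S, -, rfl⟩
  exact (Set.ncard_le_ncard (Set.subset_univ S)).trans_eq (Set.ncard_univ V)

theorem ncard_le_alphaK (h : IsKIndOn G k U S) : S.ncard ≤ alphaK G k U :=
  le_csSup (bddAbove_ncard_isKIndOn G k U) ⟨S, h, rfl⟩

theorem exists_isKIndOn_ncard_eq_alphaK (G : SimpleGraph V) (k : ℕ) (U : Set V) :
    ∃ S, IsKIndOn G k U S ∧ S.ncard = alphaK G k U :=
  Nat.sSup_mem (s := {n | ∃ S, IsKIndOn G k U S ∧ S.ncard = n})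
    ⟨0, ∅, ⟨Set.empty_subset _, fun _ hv => absurd hv (Set.notMem_empty _)⟩, Set.ncard_empty V⟩
    (bddAbove_ncard_isKIndOn G k U)

theorem mem_of_isKDomOn_of_ncard_neighborSet_lt {x : V} (h : IsKDomOn G k U S) (hx : x ∈ U)
    (hdeg : (G.neighborSet x).ncard < k) : x ∈ S := by
  by_contra hxS
  have := (h.2 x hx hxS).trans (Set.ncard_inter_le_ncard_left _ _)
  omega

end NumberBounds

namespace Sum

variable {V : Type*}

@[simp]
theorem preimage_inl_insert_inr_image (A : Set V) :
    inl ⁻¹' (insert (inr ()) (inl '' A) : Set (V ⊕ Unit)) = A := by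
  ext
  simp

variable [Finite V]

theorem ncard_insert_inr_image_inl (A : Set V) :
    (insert (inr ()) (inl '' A) : Set (V ⊕ Unit)).ncard = A.ncard + 1 := by
  rw [Set.ncard_insert_of_notMem (by simp), Set.ncard_image_of_injective _ inl_injective]

theorem ncard_le_ncard_preimage_inl_add_one (S : Set (V ⊕ Unit)) :
    S.ncard ≤ (inl ⁻¹' S).ncard + 1 := by
  refine (Set.ncard_le_ncard (t := insert (inr ()) (inl '' (inl ⁻¹' S))) ?_).trans
    (ncard_insert_inr_image_inl _).le
  rintro (x | ⟨⟩) hx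
  · exact Set.mem_insert_of_mem _ ⟨x, hx, rfl⟩
  · exact Set.mem_insert _ _

theorem ncard_eq_ncard_preimage_inl_add_one {S : Set (V ⊕ Unit)} (h : inr () ∈ S) :
    S.ncard = (inl ⁻¹' S).ncard + 1 := by
  refine le_antisymm (ncard_le_ncard_preimage_inl_add_one S) ?_
  rw [← ncard_insert_inr_image_inl]
  refine Set.ncard_le_ncard (Set.insert_subset h ?_)
  exact Set.image_preimage_subset _ _

end Sum

section PathGadget

variable {V : Type*} [Finite V] {G : SimpleGraph V} {a b v : V} {A : Set V}

theorem isKDomOn_insert_sdiff_singleton (hNb : G.neighborSet b = {a, v}) (hav : a ≠ v)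
    (haA : a ∈ A) (hA : ∀ x ∉ A, x ≠ v → 2 ≤ (G.neighborSet x ∩ A).ncard) :
    IsKDomOn G 2 Set.univ (insert v (A \ {b})) := by
  refine ⟨Set.subset_univ _, fun x _ hx => ?_⟩
  have hxv : x ≠ v := fun hxv => hx (hxv ▸ Set.mem_insert _ _)
  by_cases hxb : x = b
  · subst hxb
    rw [← Set.ncard_pair hav]
    refine Set.ncard_le_ncard (Set.subset_inter hNb.ge ?_)
    rintro y (rfl | rfl)
    · exact Set.mem_insert_of_mem _ ⟨haA, (G.ne_of_adj (hNb.ge (by simp))).symm⟩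
    · exact Set.mem_insert _ _
  · have hxA : x ∉ A := fun hxA => hx (Set.mem_insert_of_mem _ ⟨hxA, hxb⟩)
    refine (hA x hxA hxv).trans (Set.ncard_le_ncard ?_)
    rintro y ⟨hxy, hyA⟩
    refine ⟨hxy, Set.mem_insert_of_mem _ ⟨hyA, ?_⟩⟩
    rintro rfl
    have : x ∈ G.neighborSet y := hxy.symm
    rw [hNb] at this
    rcases this with rfl | rfl
    exacts [hxA haA, hxv rfl]

theorem isKIndOn_sdiff_union_pair (hNa : G.neighborSet a = {b}) (hNb : G.neighborSet b = {a, v})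
    (hA : IsKIndOn G 2 Set.univ A) :
    IsKIndOn G 2 Set.univ (A \ {a, b, v} ∪ {a, b}) := by
  have adj_a {x : V} (hx : G.Adj x a) : x = b := by
    simpa [hNa] using (show x ∈ G.neighborSet a from hx.symm)
  have adj_b {x : V} (hx : G.Adj x b) : x = a ∨ x = v := by
    simpa [hNb] using (show x ∈ G.neighborSet b from hx.symm)
  refine ⟨Set.subset_univ _, ?_⟩
  rintro x (⟨hxA, hxP⟩ | hx)
  · refine (Set.ncard_le_ncard ?_).trans (hA.2 x hxA)
    rintro y ⟨hxy, ⟨hyA, -⟩ | rfl | rfl⟩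
    · exact ⟨hxy, hyA⟩
    · exact absurd (Or.inr (Or.inl (adj_a hxy))) hxP
    · rcases adj_b hxy with rfl | rfl <;> simp at hxP
  · rcases hx with rfl | rfl
    · refine Set.ncard_le_one_iff_subsingleton.2 ((Set.subsingleton_singleton (a := b)).anti ?_)
      exact hNa ▸ Set.inter_subset_left
    · refine Set.ncard_le_one_iff_subsingleton.2 ((Set.subsingleton_singleton (a := a)).anti ?_)
      rintro y ⟨hy, hyB⟩
      have hyb : y ≠ x := (G.ne_of_adj hy).symm
      rw [hNb] at hy
      rcases hy with rfl | rfl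
      · rfl
      · simpa [hyb] using hyB

theorem ncard_le_ncard_sdiff_union_pair (hab : a ≠ b) (hav : a ≠ v) (hbv : b ≠ v)
    (hP : ¬{a, b, v} ⊆ A) : A.ncard ≤ (A \ {a, b, v} ∪ {a, b}).ncard := by
  have hlt : (A ∩ {a, b, v}).ncard < 3 := by
    rw [← Set.ncard_eq_three.2 ⟨a, b, v, hab, hav, hbv, rfl⟩]
    exact Set.ncard_lt_ncard
      (Set.inter_subset_right.ssubset_of_ne fun h => hP (h ▸ Set.inter_subset_left))
  have hsplit := Set.ncard_inter_add_ncard_sdiff_eq_ncard A {a, b, v}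
  rw [Set.ncard_union_eq (by simp [Set.disjoint_left]; tauto), Set.ncard_pair hab]
  omega

end PathGadget

def IsPendantExtension {V : Type*} (T' : SimpleGraph V) (v : V) (T : SimpleGraph (V ⊕ Unit)) :
    Prop :=
  ∀ a b, T.Adj a b ↔
    ((∃ x y, T'.Adj x y ∧ a = Sum.inl x ∧ b = Sum.inl y) ∨
      (a = Sum.inl v ∧ b = Sum.inr ()) ∨ (a = Sum.inr () ∧ b = Sum.inl v))

namespace IsPendantExtension

open Sum

variable {V : Type*} {T' : SimpleGraph V} {v : V} {T : SimpleGraph (V ⊕ Unit)}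
  (h : IsPendantExtension T' v T)
include h

theorem neighborSet_inr : T.neighborSet (inr ()) = {inl v} := by
  ext w
  rw [mem_neighborSet, h]
  simp

theorem neighborSet_inl_of_ne {x : V} (hx : x ≠ v) :
    T.neighborSet (inl x) = inl '' T'.neighborSet x := by
  ext (y | ⟨⟩) <;> simp [h _ _, hx]

theorem image_neighborSet_subset (x : V) : inl '' T'.neighborSet x ⊆ T.neighborSet (inl x) := by
  rintro _ ⟨y, hy, rfl⟩
  exact (h _ _).2 (Or.inl ⟨x, y, hy, rfl, rfl⟩)

theorem ncard_neighborSet_inl_inter_of_ne {x : V} (hx : x ≠ v) (S : Set (V ⊕ Unit)) :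
    (T.neighborSet (inl x) ∩ S).ncard = (T'.neighborSet x ∩ inl ⁻¹' S).ncard := by
  rw [h.neighborSet_inl_of_ne hx, ← Set.image_inter_preimage,
    Set.ncard_image_of_injective _ inl_injective]

theorem isKIndOn_insert_inr_image {k : ℕ} {A : Set V} (hA : IsKIndOn T' k Set.univ A)
    (hvA : v ∉ A) : IsKIndOn T k Set.univ (insert (inr ()) (inl '' A)) := by
  refine ⟨Set.subset_univ _, ?_⟩
  rintro w (rfl | ⟨x, hx, rfl⟩)
  · rw [h.neighborSet_inr, Set.singleton_inter_eq_empty.2 (by simpa using hvA)]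
    simp
  · rw [h.ncard_neighborSet_inl_inter_of_ne (ne_of_mem_of_not_mem hx hvA)]
    simpa using hA.2 x hx

variable [Finite V]

theorem ncard_neighborSet_inter_preimage_le (x : V) (S : Set (V ⊕ Unit)) :
    (T'.neighborSet x ∩ inl ⁻¹' S).ncard ≤ (T.neighborSet (inl x) ∩ S).ncard := by
  rw [← Set.ncard_image_of_injective _ inl_injective, Set.image_inter_preimage]
  exact Set.ncard_le_ncard (Set.inter_subset_inter_left _ (h.image_neighborSet_subset x))

theorem isKDomOn_insert_inr_image {k : ℕ} {A : Set V} (hA : IsKDomOn T' k Set.univ A) :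
    IsKDomOn T k Set.univ (insert (inr ()) (inl '' A)) := by
  refine ⟨Set.subset_univ _, ?_⟩
  rintro (x | ⟨⟩) - hx
  · have hxA : x ∉ A := fun hxA => hx (Set.mem_insert_of_mem _ ⟨x, hxA, rfl⟩)
    calc k ≤ (T'.neighborSet x ∩ A).ncard := hA.2 x trivial hxA
      _ = (T'.neighborSet x ∩ inl ⁻¹' insert (inr ()) (inl '' A)).ncard := by simp
      _ ≤ _ := h.ncard_neighborSet_inter_preimage_le x _
  · exact absurd (Set.mem_insert _ _) hx

theorem isKIndOn_preimage_inl {k : ℕ} {S : Set (V ⊕ Unit)} (hS : IsKIndOn T k Set.univ S) :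
    IsKIndOn T' k Set.univ (inl ⁻¹' S) :=
  ⟨Set.subset_univ _, fun x hx => (h.ncard_neighborSet_inter_preimage_le x S).trans (hS.2 _ hx)⟩

theorem gammaK_le_add_one (k : ℕ) : gammaK T k Set.univ ≤ gammaK T' k Set.univ + 1 := by
  obtain ⟨A, hA, hcard⟩ := exists_isKDomOn_ncard_eq_gammaK T' k Set.univ
  calc gammaK T k Set.univ ≤ (insert (inr ()) (inl '' A)).ncard :=
        gammaK_le_ncard (h.isKDomOn_insert_inr_image hA)
    _ ≤ (inl '' A).ncard + 1 := Set.ncard_insert_le _ _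
    _ = gammaK T' k Set.univ + 1 := by rw [Set.ncard_image_of_injective _ inl_injective, hcard]

theorem alphaK_le_add_one (k : ℕ) : alphaK T k Set.univ ≤ alphaK T' k Set.univ + 1 := by
  obtain ⟨S, hS, hcard⟩ := exists_isKIndOn_ncard_eq_alphaK T k Set.univ
  calc alphaK T k Set.univ = S.ncard := hcard.symm
    _ ≤ (inl ⁻¹' S).ncard + 1 := ncard_le_ncard_preimage_inl_add_one S
    _ ≤ alphaK T' k Set.univ + 1 := by grw [ncard_le_alphaK (h.isKIndOn_preimage_inl hS)]
variable {a b : V}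

theorem add_one_le_gammaK (hNa : T'.neighborSet a = {b}) (hNb : T'.neighborSet b = {a, v})
    (hav : a ≠ v) : gammaK T' 2 Set.univ + 1 ≤ gammaK T 2 Set.univ := by
  obtain ⟨S, hS, hcard⟩ := exists_isKDomOn_ncard_eq_gammaK T 2 Set.univ
  have hbv : b ≠ v := T'.ne_of_adj (hNb.ge (by simp))
  have huS : inr () ∈ S :=
    mem_of_isKDomOn_of_ncard_neighborSet_lt hS trivial (by simp [h.neighborSet_inr])
  have haS : inl a ∈ S :=
    mem_of_isKDomOn_of_ncard_neighborSet_lt hS trivial (by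
      simp [h.neighborSet_inl_of_ne hav, hNa])
  have hdom (x : V) (hxS : x ∉ inl ⁻¹' S) (hxv : x ≠ v) :
      2 ≤ (T'.neighborSet x ∩ inl ⁻¹' S).ncard := by
    simpa [h.ncard_neighborSet_inl_inter_of_ne hxv] using hS.2 (inl x) trivial hxS
  have hbvS : b ∈ inl ⁻¹' S ∨ v ∈ inl ⁻¹' S := by
    by_contra! hbvS
    have h2 := hdom b hbvS.1 hbv
    rw [hNb] at h2
    have : ({a, v} ∩ inl ⁻¹' S).ncard ≤ 1 :=
      Set.ncard_le_one_iff_subsingleton.2 <| (Set.subsingleton_singleton (a := a)).anti <| by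
        rintro y ⟨rfl | rfl, hy⟩
        exacts [rfl, absurd hy hbvS.2]
    omega
  have hD := isKDomOn_insert_sdiff_singleton hNb hav haS hdom
  have hDcard : (insert v (inl ⁻¹' S \ {b})).ncard ≤ (inl ⁻¹' S).ncard := by
    rcases hbvS with hb | hv
    · grw [Set.ncard_insert_le, Set.ncard_sdiff_singleton_add_one hb]
    · grw [Set.ncard_le_ncard (Set.insert_subset hv Set.sdiff_subset)]
  calc gammaK T' 2 Set.univ + 1 ≤ (inl ⁻¹' S).ncard + 1 := by grw [gammaK_le_ncard hD, hDcard]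
    _ = gammaK T 2 Set.univ := by rw [← hcard, ncard_eq_ncard_preimage_inl_add_one huS]

theorem add_one_le_alphaK (hNa : T'.neighborSet a = {b}) (hNb : T'.neighborSet b = {a, v})
    (hav : a ≠ v) : alphaK T' 2 Set.univ + 1 ≤ alphaK T 2 Set.univ := by
  obtain ⟨A, hA, hcard⟩ := exists_isKIndOn_ncard_eq_alphaK T' 2 Set.univ
  have hab : a ≠ b := T'.ne_of_adj (hNa.ge rfl)
  have hbv : b ≠ v := T'.ne_of_adj (hNb.ge (by simp))
  have hP : ¬{a, b, v} ⊆ A := fun hP => by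
    have := (Set.ncard_le_ncard (Set.subset_inter hNb.ge (by grind))).trans (hA.2 b (hP (by simp)))
    rw [Set.ncard_pair hav] at this
    omega
  have hv : v ∉ A \ {a, b, v} ∪ {a, b} := by simp [hav.symm, hbv.symm]
  have hS := h.isKIndOn_insert_inr_image (isKIndOn_sdiff_union_pair hNa hNb hA) hv
  calc alphaK T' 2 Set.univ + 1 ≤ (A \ {a, b, v} ∪ {a, b}).ncard + 1 := by
        grw [← hcard, ncard_le_ncard_sdiff_union_pair hab hav hbv hP]
    _ = _ := (ncard_insert_inr_image_inl _).symm
    _ ≤ alphaK T 2 Set.univ := ncard_le_alphaK hS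

end IsPendantExtension

theorem stmt8_general {V : Type*} [Fintype V] (T' : SimpleGraph V)
    (a b v : V) (hdist : ([a, b, v] : List V).Pairwise (· ≠ ·))
    (hab : T'.Adj a b) (hbv : T'.Adj b v)
    (hda : (T'.neighborSet a).ncard = 1) (hdb : (T'.neighborSet b).ncard = 2)
    (T : SimpleGraph (V ⊕ Unit))
    (hadj : ∀ a b, T.Adj a b ↔
      ((∃ x y, T'.Adj x y ∧ a = Sum.inl x ∧ b = Sum.inl y) ∨
       (a = Sum.inl v ∧ b = (Sum.inr () : V ⊕ Unit)) ∨ (a = (Sum.inr () : V ⊕ Unit) ∧ b = Sum.inl v))) :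
    gammaK T 2 Set.univ = gammaK T' 2 Set.univ + 1 ∧
    alphaK T 2 Set.univ = alphaK T' 2 Set.univ + 1 ∧
    (alphaK T 2 Set.univ : ℤ) - (gammaK T 2 Set.univ : ℤ) =
      (alphaK T' 2 Set.univ : ℤ) - (gammaK T' 2 Set.univ : ℤ) := by
  have h : IsPendantExtension T' v T := hadj
  have hav : a ≠ v := by simp at hdist; tauto
  have hNa : T'.neighborSet a = {b} :=
    (Set.eq_of_subset_of_ncard_le (t := T'.neighborSet a) (Set.singleton_subset_iff.2 hab)
      (by rw [hda, Set.ncard_singleton])).symm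
  have hNb : T'.neighborSet b = {a, v} :=
    (Set.eq_of_subset_of_ncard_le (t := T'.neighborSet b)
      (Set.insert_subset hab.symm (Set.singleton_subset_iff.2 hbv))
      (by rw [hdb, Set.ncard_pair hav])).symm
  have hγ := le_antisymm (h.gammaK_le_add_one 2) (h.add_one_le_gammaK hNa hNb hav)
  have hα := le_antisymm (h.alphaK_le_add_one 2) (h.add_one_le_alphaK hNa hNb hav)
  refine ⟨hγ, hα, ?_⟩
  rw [hγ, hα]
  push_cast
  ring

theorem stmt8 {V : Type*} [Fintype V] (T' : SimpleGraph V) (hT' : T'.IsTree)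
    (a b v : V) (hdist : ([a, b, v] : List V).Pairwise (· ≠ ·))
    (hab : T'.Adj a b) (hbv : T'.Adj b v)
    (hda : (T'.neighborSet a).ncard = 1) (hdb : (T'.neighborSet b).ncard = 2)
    (T : SimpleGraph (V ⊕ Unit))
    (hadj : ∀ a b, T.Adj a b ↔
      ((∃ x y, T'.Adj x y ∧ a = Sum.inl x ∧ b = Sum.inl y) ∨
       (a = Sum.inl v ∧ b = (Sum.inr () : V ⊕ Unit)) ∨ (a = (Sum.inr () : V ⊕ Unit) ∧ b = Sum.inl v))) :
    gammaK T 2 Set.univ = gammaK T' 2 Set.univ + 1 ∧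
    alphaK T 2 Set.univ = alphaK T' 2 Set.univ + 1 ∧
    (alphaK T 2 Set.univ : ℤ) - (gammaK T 2 Set.univ : ℤ) =
      (alphaK T' 2 Set.univ : ℤ) - (gammaK T' 2 Set.univ : ℤ) :=
  stmt8_general T' a b v hdist hab hbv hda hdb T hadj
end

section
/- Let T' be a finite tree containing six distinct vertices a, v, b, c, d, e such that v is adjacent to a and b, and b–c–d–e is a path in T', where in T' the degrees satisfy deg(a) = 1, deg(b) = deg(c) = deg(d) = 2, and deg(e) = 1. Let T be the tree obtained from T' by adding a new vertex u and the edge vu. Then γ₂(T) = γ₂(T') + 1 and α₂(T) = α₂(T') + 1; in particular α₂(T) − γ₂(T) = α₂(T') − γ₂(T'). -/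
open SimpleGraph

lemma gammaK_le' {V : Type*} (G : SimpleGraph V) {S : Set V} (h : IsKDomOn G 2 Set.univ S) :
    gammaK G 2 Set.univ ≤ S.ncard := Nat.sInf_le ⟨S, h, rfl⟩

lemma gammaK_exists {V : Type*} (G : SimpleGraph V) :
    ∃ S, IsKDomOn G 2 Set.univ S ∧ S.ncard = gammaK G 2 Set.univ := by
  have h := Nat.sInf_mem (s := {n | ∃ S, IsKDomOn G 2 Set.univ S ∧ S.ncard = n})
    ⟨_, Set.univ, ⟨subset_rfl, fun x _ hx => absurd (Set.mem_univ x) hx⟩, rfl⟩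
  exact h

lemma alphaK_bdd {V : Type*} [Fintype V] (G : SimpleGraph V) :
    BddAbove {n | ∃ S, IsKIndOn G 2 Set.univ S ∧ S.ncard = n} := by
  refine ⟨Fintype.card V, ?_⟩
  rintro n ⟨S, -, rfl⟩
  calc S.ncard ≤ (Set.univ : Set V).ncard :=
        Set.ncard_le_ncard (Set.subset_univ S) Set.finite_univ
    _ = Fintype.card V := by rw [Set.ncard_univ, Nat.card_eq_fintype_card]

lemma le_alphaK' {V : Type*} [Fintype V] (G : SimpleGraph V) {S : Set V}
    (h : IsKIndOn G 2 Set.univ S) : S.ncard ≤ alphaK G 2 Set.univ :=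
  le_csSup (alphaK_bdd G) ⟨S, h, rfl⟩

lemma alphaK_exists {V : Type*} [Fintype V] (G : SimpleGraph V) :
    ∃ S, IsKIndOn G 2 Set.univ S ∧ S.ncard = alphaK G 2 Set.univ := by
  have h := Nat.sSup_mem (s := {n | ∃ S, IsKIndOn G 2 Set.univ S ∧ S.ncard = n})
    ⟨0, ∅, ⟨Set.empty_subset _, fun x hx => absurd hx (Set.notMem_empty x)⟩, by simp⟩
    (alphaK_bdd G)
  exact h

lemma two_le_ncard {α : Type*} [Finite α] {s : Set α} {x y : α} (hxy : x ≠ y) (hx : x ∈ s) (hy : y ∈ s) :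
    2 ≤ s.ncard :=
  (Set.one_lt_ncard_iff (Set.toFinite s)).2 ⟨x, y, hx, hy, hxy⟩

lemma ncard_le_one_of_subset_singleton {α : Type*} {s : Set α} {x : α} (h : s ⊆ {x}) :
    s.ncard ≤ 1 :=
  le_trans (Set.ncard_le_ncard h (Set.finite_singleton x)) (by simp)

theorem stmt9 {V : Type*} [Fintype V] (T' : SimpleGraph V) (hT' : T'.IsTree)
    (a v b c d e : V) (hdist : ([a, v, b, c, d, e] : List V).Pairwise (· ≠ ·))
    (hva : T'.Adj v a) (hvb : T'.Adj v b)
    (hbc : T'.Adj b c) (hcd : T'.Adj c d) (hde : T'.Adj d e)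
    (hda : (T'.neighborSet a).ncard = 1) (hdb : (T'.neighborSet b).ncard = 2)
    (hdc : (T'.neighborSet c).ncard = 2) (hdd : (T'.neighborSet d).ncard = 2)
    (hde' : (T'.neighborSet e).ncard = 1)
    (T : SimpleGraph (V ⊕ Unit))
    (hadj : ∀ a b, T.Adj a b ↔
      ((∃ x y, T'.Adj x y ∧ a = Sum.inl x ∧ b = Sum.inl y) ∨
       (a = Sum.inl v ∧ b = (Sum.inr () : V ⊕ Unit)) ∨ (a = (Sum.inr () : V ⊕ Unit) ∧ b = Sum.inl v))) :
    gammaK T 2 Set.univ = gammaK T' 2 Set.univ + 1 ∧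
    alphaK T 2 Set.univ = alphaK T' 2 Set.univ + 1 ∧
    (alphaK T 2 Set.univ : ℤ) - (gammaK T 2 Set.univ : ℤ) =
      (alphaK T' 2 Set.univ : ℤ) - (gammaK T' 2 Set.univ : ℤ) := by
  classical
  simp only [List.pairwise_cons, List.mem_cons, List.mem_singleton, List.not_mem_nil,
    forall_eq_or_imp, forall_eq, List.Pairwise.nil, or_false, false_or] at hdist
  obtain ⟨⟨hav, hab, hac, had, hae⟩, ⟨hvb2, hvc, hvd, hve⟩, ⟨hbc2, hbd, hbe⟩,
    ⟨hcd2, hce⟩, hde2, -⟩ := hdist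
  -- neighbor sets in T'
  have hNa : T'.neighborSet a = {v} := by
    symm
    refine Set.eq_of_subset_of_ncard_le ?_ ?_ (Set.toFinite _)
    · simp [SimpleGraph.mem_neighborSet, hva.symm]
    · rw [hda]; simp
  have hNe : T'.neighborSet e = {d} := by
    symm
    refine Set.eq_of_subset_of_ncard_le ?_ ?_ (Set.toFinite _)
    · simp [SimpleGraph.mem_neighborSet, hde.symm]
    · rw [hde']; simp
  have hNb : T'.neighborSet b = {v, c} := by
    symm
    refine Set.eq_of_subset_of_ncard_le ?_ ?_ (Set.toFinite _)
    · rw [Set.insert_subset_iff, Set.singleton_subset_iff]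
      exact ⟨hvb.symm, hbc⟩
    · rw [hdb, Set.ncard_pair hvc]
  have hNc : T'.neighborSet c = {b, d} := by
    symm
    refine Set.eq_of_subset_of_ncard_le ?_ ?_ (Set.toFinite _)
    · rw [Set.insert_subset_iff, Set.singleton_subset_iff]
      exact ⟨hbc.symm, hcd⟩
    · rw [hdc, Set.ncard_pair hbd]
  have hNd : T'.neighborSet d = {c, e} := by
    symm
    refine Set.eq_of_subset_of_ncard_le ?_ ?_ (Set.toFinite _)
    · rw [Set.insert_subset_iff, Set.singleton_subset_iff]
      exact ⟨hcd.symm, hde⟩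
    · rw [hdd, Set.ncard_pair hce]
  -- adjacency in T
  have hll : ∀ x y : V, T.Adj (Sum.inl x) (Sum.inl y) ↔ T'.Adj x y := by
    intro x y
    rw [hadj]
    constructor
    · rintro (⟨p, q, h, hp, hq⟩ | ⟨h1, h2⟩ | ⟨h1, h2⟩)
      · obtain rfl := Sum.inl_injective hp
        obtain rfl := Sum.inl_injective hq
        exact h
      · exact absurd h2 (by simp)
      · exact absurd h1 (by simp)
    · intro h; exact Or.inl ⟨x, y, h, rfl, rfl⟩
  have hlr : ∀ x : V, T.Adj (Sum.inl x) (Sum.inr ()) ↔ x = v := by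
    intro x
    rw [hadj]
    constructor
    · rintro (⟨p, q, h, hp, hq⟩ | ⟨h1, h2⟩ | ⟨h1, h2⟩)
      · exact absurd hq (by simp)
      · exact Sum.inl_injective h1
      · exact absurd h1 (by simp)
    · rintro rfl; exact Or.inr (Or.inl ⟨rfl, rfl⟩)
  have hNu : T.neighborSet (Sum.inr ()) = {Sum.inl v} := by
    ext w
    rcases w with x | u
    · simp only [SimpleGraph.mem_neighborSet, Set.mem_singleton_iff]
      rw [T.adj_comm, hlr]
      constructor
      · rintro rfl; rfl
      · intro h; exact Sum.inl_injective h
    · cases u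
      simp only [SimpleGraph.mem_neighborSet, Set.mem_singleton_iff]
      constructor
      · intro h; exact absurd h (T.irrefl)
      · intro h; exact absurd h (by simp)
  have hNl : ∀ x : V, x ≠ v → T.neighborSet (Sum.inl x) = Sum.inl '' T'.neighborSet x := by
    intro x hx
    ext w
    rcases w with y | u
    · simp only [SimpleGraph.mem_neighborSet, Set.mem_image]
      rw [hll]
      constructor
      · intro h; exact ⟨y, h, rfl⟩
      · rintro ⟨z, hz, hzz⟩; obtain rfl := Sum.inl_injective hzz.symm; exact hz
    · cases u
      simp only [SimpleGraph.mem_neighborSet, Set.mem_image]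
      rw [hlr]
      constructor
      · intro h; exact absurd h hx
      · rintro ⟨z, hz, hzz⟩; exact absurd hzz (by simp)
  -- key counting lemmas
  have hkey : ∀ (x : V), x ≠ v → ∀ S : Set (V ⊕ Unit),
      (T.neighborSet (Sum.inl x) ∩ S).ncard = (T'.neighborSet x ∩ Sum.inl ⁻¹' S).ncard := by
    intro x hx S
    rw [hNl x hx, ← Set.image_inter_preimage, Set.ncard_image_of_injective _ Sum.inl_injective]
  have hmono : ∀ (x : V) (S' : Set V) (S : Set (V ⊕ Unit)), Sum.inl '' S' ⊆ S →
      (T'.neighborSet x ∩ S').ncard ≤ (T.neighborSet (Sum.inl x) ∩ S).ncard := by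
    intro x S' S hS
    have hsub : Sum.inl '' (T'.neighborSet x ∩ S') ⊆ T.neighborSet (Sum.inl x) ∩ S := by
      rintro w ⟨y, ⟨hy1, hy2⟩, rfl⟩
      exact ⟨(hll x y).2 hy1, hS ⟨y, hy2, rfl⟩⟩
    calc (T'.neighborSet x ∩ S').ncard
        = (Sum.inl '' (T'.neighborSet x ∩ S')).ncard :=
          (Set.ncard_image_of_injective _ Sum.inl_injective).symm
      _ ≤ _ := Set.ncard_le_ncard hsub (Set.toFinite _)
  have hpre : ∀ base : Set V, Sum.inl ⁻¹' (Sum.inl '' base ∪ {Sum.inr ()}) = base := by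
    intro base
    ext x
    simp [Sum.inl_injective.mem_set_image]
  have hcard1 : ∀ base : Set V,
      (Sum.inl '' base ∪ {Sum.inr ()} : Set (V ⊕ Unit)).ncard = base.ncard + 1 := by
    intro base
    rw [Set.union_singleton, Set.ncard_insert_of_notMem (by simp),
      Set.ncard_image_of_injective _ Sum.inl_injective]
  have hindu : ∀ S : Set (V ⊕ Unit), (T.neighborSet (Sum.inr ()) ∩ S).ncard ≤ 1 := by
    intro S
    rw [hNu]
    exact ncard_le_one_of_subset_singleton Set.inter_subset_left
  have hScard : ∀ S : Set (V ⊕ Unit), Sum.inr () ∈ S →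
      S.ncard = (Sum.inl ⁻¹' S).ncard + 1 := by
    intro S hu
    have hSeq : S = Sum.inl '' (Sum.inl ⁻¹' S) ∪ {Sum.inr ()} := by
      ext w
      rcases w with x | u
      · simp [Sum.inl_injective.mem_set_image]
      · cases u; simp [hu]
    conv_lhs => rw [hSeq]
    rw [hcard1]
  -- γ(T) ≤ γ(T') + 1
  have hga : gammaK T 2 Set.univ ≤ gammaK T' 2 Set.univ + 1 := by
    obtain ⟨S', hS', hc⟩ := gammaK_exists T'
    have hdom : IsKDomOn T 2 Set.univ (Sum.inl '' S' ∪ {Sum.inr ()}) := by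
      refine ⟨Set.subset_univ _, ?_⟩
      rintro (x | u) - hw
      · have hx : x ∉ S' := fun h => hw (Or.inl ⟨x, h, rfl⟩)
        have h2 := hS'.2 x (Set.mem_univ x) hx
        exact le_trans h2 (hmono x S' _ Set.subset_union_left)
      · exact absurd (Or.inr rfl) hw
    calc gammaK T 2 Set.univ ≤ (Sum.inl '' S' ∪ {Sum.inr ()} : Set (V ⊕ Unit)).ncard :=
          gammaK_le' T hdom
      _ = S'.ncard + 1 := hcard1 S'
      _ = gammaK T' 2 Set.univ + 1 := by rw [hc]
  -- γ(T') + 1 ≤ γ(T)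
  have hgb : gammaK T' 2 Set.univ + 1 ≤ gammaK T 2 Set.univ := by
    obtain ⟨S, hS, hc⟩ := gammaK_exists T
    set P : Set V := Sum.inl ⁻¹' S with hP
    have hmemP : ∀ x : V, x ∈ P ↔ Sum.inl x ∈ S := fun x => Iff.rfl
    have hu : Sum.inr () ∈ S := by
      by_contra hu
      have h2 := hS.2 _ (Set.mem_univ _) hu
      rw [hNu] at h2
      have := ncard_le_one_of_subset_singleton (Set.inter_subset_left :
        ({Sum.inl v} : Set (V ⊕ Unit)) ∩ S ⊆ {Sum.inl v})
      omega
    have hdomP : ∀ x : V, x ≠ v → x ∉ P → 2 ≤ (T'.neighborSet x ∩ P).ncard := by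
      intro x hx hxP
      have h2 := hS.2 (Sum.inl x) (Set.mem_univ _) hxP
      rwa [hkey x hx S] at h2
    have haP : a ∈ P := by
      by_contra haP
      have h2 := hdomP a hav haP
      rw [hNa] at h2
      have := ncard_le_one_of_subset_singleton (Set.inter_subset_left :
        ({v} : Set V) ∩ P ⊆ {v})
      omega
    have heP : e ∈ P := by
      by_contra heP
      have h2 := hdomP e hve.symm heP
      rw [hNe] at h2
      have := ncard_le_one_of_subset_singleton (Set.inter_subset_left :
        ({d} : Set V) ∩ P ⊆ {d})
      omega
    -- produce a 2-dominating set of T' of size ≤ P.ncard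
    have hmain : ∃ S'' : Set V, IsKDomOn T' 2 Set.univ S'' ∧ S''.ncard ≤ P.ncard := by
      by_cases hvP : v ∈ P
      · refine ⟨P, ⟨Set.subset_univ _, ?_⟩, le_rfl⟩
        intro x _ hx
        have hxv : x ≠ v := fun h => hx (h ▸ hvP)
        exact hdomP x hxv hx
      · -- v ∉ P, so b ∈ P
        have hbP : b ∈ P := by
          by_contra hbP
          have h2 := hdomP b hvb2.symm hbP
          rw [hNb] at h2
          have hsub : ({v, c} : Set V) ∩ P ⊆ {c} := by
            rintro y ⟨(rfl | rfl), hy⟩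
            · exact absurd hy hvP
            · rfl
          have := ncard_le_one_of_subset_singleton hsub
          omega
        by_cases hcP : c ∈ P
        · -- S'' = insert v (P \ {b})
          refine ⟨insert v (P \ {b}), ⟨Set.subset_univ _, ?_⟩, ?_⟩
          · intro x _ hx
            have hxv : x ≠ v := by rintro rfl; exact hx (Set.mem_insert _ _)
            have hxc : x ≠ c := by
              rintro rfl
              exact hx (Set.mem_insert_of_mem _ ⟨hcP, hbc2.symm⟩)
            by_cases hxb : x = b
            · rw [hxb, hNb]
              exact two_le_ncard hvc ⟨Set.mem_insert _ _, Set.mem_insert _ _⟩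
                ⟨Set.mem_insert_of_mem _ rfl, Set.mem_insert_of_mem _ ⟨hcP, hbc2.symm⟩⟩
            · have hxP : x ∉ P := fun h => hx (Set.mem_insert_of_mem _ ⟨h, hxb⟩)
              have h2 := hdomP x hxv hxP
              refine le_trans h2 (Set.ncard_le_ncard ?_ (Set.toFinite _))
              rintro y ⟨hy1, hy2⟩
              have hyb : y ≠ b := by
                rintro rfl
                rw [SimpleGraph.mem_neighborSet, T'.adj_comm, ← SimpleGraph.mem_neighborSet,
                  hNb] at hy1
                rcases hy1 with rfl | rfl
                · exact hxv rfl
                · exact hxc rfl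
              exact ⟨hy1, Set.mem_insert_of_mem _ ⟨hy2, hyb⟩⟩
          · have h1 : 0 < P.ncard := (Set.ncard_pos (Set.toFinite P)).2 ⟨b, hbP⟩
            calc (insert v (P \ {b})).ncard ≤ (P \ {b}).ncard + 1 := Set.ncard_insert_le _ _
              _ = P.ncard - 1 + 1 := by rw [Set.ncard_diff_singleton_of_mem hbP]
              _ ≤ P.ncard := by omega
        · -- c ∉ P, hence d ∈ P
          have hdP : d ∈ P := by
            by_contra hdP
            have h2 := hdomP c hvc.symm hcP
            rw [hNc] at h2
            have hsub : ({b, d} : Set V) ∩ P ⊆ {b} := by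
              rintro y ⟨(rfl | rfl), hy⟩
              · rfl
              · exact absurd hy hdP
            have := ncard_le_one_of_subset_singleton hsub
            omega
          refine ⟨insert v (insert c (P \ {b, d})), ⟨Set.subset_univ _, ?_⟩, ?_⟩
          · intro x _ hx
            have hxv : x ≠ v := by rintro rfl; exact hx (Set.mem_insert _ _)
            have hxc : x ≠ c := by
              rintro rfl
              exact hx (Set.mem_insert_of_mem _ (Set.mem_insert _ _))
            by_cases hxb : x = b
            · rw [hxb, hNb]
              exact two_le_ncard hvc ⟨Set.mem_insert _ _, Set.mem_insert _ _⟩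
                ⟨Set.mem_insert_of_mem _ rfl, Set.mem_insert_of_mem _ (Set.mem_insert c _)⟩
            · by_cases hxd : x = d
              · rw [hxd, hNd]
                exact two_le_ncard hce
                  ⟨Set.mem_insert _ _, Set.mem_insert_of_mem _ (Set.mem_insert c _)⟩
                  ⟨Set.mem_insert_of_mem _ rfl,
                   Set.mem_insert_of_mem _ (Set.mem_insert_of_mem _
                     ⟨heP, by simp [hbe.symm, hde2.symm]⟩)⟩
              · have hxP : x ∉ P := fun h =>
                  hx (Set.mem_insert_of_mem _ (Set.mem_insert_of_mem _
                    ⟨h, by simp [hxb, hxd]⟩))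
                have h2 := hdomP x hxv hxP
                refine le_trans h2 (Set.ncard_le_ncard ?_ (Set.toFinite _))
                rintro y ⟨hy1, hy2⟩
                have hyb : y ≠ b := by
                  rintro rfl
                  rw [SimpleGraph.mem_neighborSet, T'.adj_comm, ← SimpleGraph.mem_neighborSet,
                    hNb] at hy1
                  rcases hy1 with rfl | rfl
                  · exact hxv rfl
                  · exact hxc rfl
                have hyd : y ≠ d := by
                  rintro rfl
                  rw [SimpleGraph.mem_neighborSet, T'.adj_comm, ← SimpleGraph.mem_neighborSet,
                    hNd] at hy1
                  rcases hy1 with rfl | rfl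
                  · exact hxc rfl
                  · exact hxP heP
                exact ⟨hy1, Set.mem_insert_of_mem _ (Set.mem_insert_of_mem _
                  ⟨hy2, by simp [hyb, hyd]⟩)⟩
          · have hbd' : ({b, d} : Set V) ⊆ P := by
              rw [Set.insert_subset_iff, Set.singleton_subset_iff]; exact ⟨hbP, hdP⟩
            have h2 : 2 ≤ P.ncard := two_le_ncard hbd hbP hdP
            calc (insert v (insert c (P \ {b, d}))).ncard
                ≤ (insert c (P \ {b, d})).ncard + 1 := Set.ncard_insert_le _ _
              _ ≤ (P \ {b, d}).ncard + 1 + 1 := by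
                  have := Set.ncard_insert_le c (P \ {b, d}); omega
              _ = P.ncard - 2 + 2 := by
                  rw [Set.ncard_diff hbd', Set.ncard_pair hbd]
              _ ≤ P.ncard := by omega
    obtain ⟨S'', hS'', hcard⟩ := hmain
    have h1 : gammaK T' 2 Set.univ ≤ S''.ncard := gammaK_le' T' hS''
    have h2 : S.ncard = P.ncard + 1 := hScard S hu
    omega
  -- α(T') + 1 ≤ α(T)
  have haa : alphaK T' 2 Set.univ + 1 ≤ alphaK T 2 Set.univ := by
    obtain ⟨S, hS, hc⟩ := alphaK_exists T'
    -- construct base with v ∉ base, |base| ≥ |S|, base 2-independent in T'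
    have hmain : ∃ base : Set V, v ∉ base ∧ S.ncard ≤ base.ncard ∧
        ∀ x ∈ base, (T'.neighborSet x ∩ base).ncard ≤ 1 := by
      by_cases hvS : v ∈ S
      · by_cases haS : a ∈ S
        · -- case C : v ∈ S, a ∈ S ⇒ b ∉ S
          have hbS : b ∉ S := by
            intro hbS
            have h1 := hS.2 v hvS
            have h2 : 2 ≤ (T'.neighborSet v ∩ S).ncard :=
              two_le_ncard hab ⟨hva, haS⟩ ⟨hvb, hbS⟩
            omega
          by_cases hcd3 : c ∈ S ∧ d ∈ S
          · -- case C2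
            obtain ⟨hcS, hdS⟩ := hcd3
            have heS : e ∉ S := by
              intro heS
              have h1 := hS.2 d hdS
              have h2 : 2 ≤ (T'.neighborSet d ∩ S).ncard := by
                rw [hNd]
                exact two_le_ncard hce ⟨Set.mem_insert c _, hcS⟩
                  ⟨Set.mem_insert_of_mem _ rfl, heS⟩
              omega
            refine ⟨insert b (insert e (S \ {v, d})), ?_, ?_, ?_⟩
            · intro hmem
              rcases Set.mem_insert_iff.1 hmem with h | hmem
              · exact hvb2 h
              rcases Set.mem_insert_iff.1 hmem with h | hmem
              · exact hve h
              exact hmem.2 (Set.mem_insert v _)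
            · have hvd' : ({v, d} : Set V) ⊆ S := by
                rw [Set.insert_subset_iff, Set.singleton_subset_iff]; exact ⟨hvS, hdS⟩
              have h2 : 2 ≤ S.ncard := two_le_ncard hvd hvS hdS
              have he1 : e ∉ insert b (S \ {v, d}) := by
                intro hmem
                rcases Set.mem_insert_iff.1 hmem with h | hmem
                · exact hbe h.symm
                · exact heS hmem.1
              have hb1 : b ∉ insert e (S \ {v, d}) := by
                intro hmem
                rcases Set.mem_insert_iff.1 hmem with h | hmem
                · exact hbe h
                · exact hbS hmem.1
              apply le_of_eq
              calc S.ncard = S.ncard - 2 + 2 := by omega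
                _ = (S \ {v, d}).ncard + 2 := by
                    rw [Set.ncard_diff hvd', Set.ncard_pair hvd]
                _ = (insert e (S \ {v, d})).ncard + 1 := by
                    rw [Set.ncard_insert_of_notMem (fun h => heS h.1) (Set.toFinite _)]
                _ = (insert b (insert e (S \ {v, d}))).ncard := by
                    rw [Set.ncard_insert_of_notMem hb1 (Set.toFinite _)]
            · intro x hx
              rcases hx with rfl | rfl | hx
              · -- x = b
                apply ncard_le_one_of_subset_singleton (x := c)
                rw [hNb]
                rintro y ⟨(rfl | rfl), hy⟩
                · rcases hy with rfl | rfl | hy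
                  · exact absurd rfl hvb2
                  · exact absurd rfl hve
                  · exact absurd (Or.inl rfl) hy.2
                · rfl
              · -- x = e
                apply ncard_le_one_of_subset_singleton (x := d)
                rw [hNe]
                exact Set.inter_subset_left
              · -- x ∈ S \ {v, d}
                obtain ⟨hxS, hxvd⟩ := hx
                simp only [Set.mem_insert_iff, Set.mem_singleton_iff, not_or] at hxvd
                by_cases hxc : x = c
                · subst hxc
                  apply ncard_le_one_of_subset_singleton (x := b)
                  rw [hNc]
                  rintro y ⟨(rfl | rfl), hy⟩
                  · rfl
                  · rcases hy with rfl | rfl | hy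
                    · exact absurd rfl hbd
                    · exact absurd rfl hde2
                    · exact absurd (Or.inr rfl) hy.2
                · refine le_trans (Set.ncard_le_ncard ?_ (Set.toFinite _)) (hS.2 x hxS)
                  rintro y ⟨hy1, hy2⟩
                  refine ⟨hy1, ?_⟩
                  rcases hy2 with rfl | rfl | hy2
                  · rw [SimpleGraph.mem_neighborSet, T'.adj_comm,
                      ← SimpleGraph.mem_neighborSet, hNb] at hy1
                    rcases hy1 with rfl | rfl
                    · exact absurd rfl hxvd.1
                    · exact absurd rfl hxc
                  · rw [SimpleGraph.mem_neighborSet, T'.adj_comm,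
                      ← SimpleGraph.mem_neighborSet, hNe] at hy1
                    rw [hy1] at hxvd
                    exact absurd rfl hxvd.2
                  · exact hy2.1
          · -- case C1 : ¬(c ∈ S ∧ d ∈ S)
            refine ⟨insert b (S \ {v}), ?_, ?_, ?_⟩
            · intro hmem
              rcases Set.mem_insert_iff.1 hmem with h | hmem
              · exact hvb2 h
              · exact hmem.2 rfl
            · have h1 : 0 < S.ncard := (Set.ncard_pos (Set.toFinite S)).2 ⟨v, hvS⟩
              have hb1 : b ∉ S \ {v} := fun h => hbS h.1
              apply le_of_eq
              calc S.ncard = S.ncard - 1 + 1 := by omega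
                _ = (S \ {v}).ncard + 1 := by rw [Set.ncard_diff_singleton_of_mem hvS]
                _ = (insert b (S \ {v})).ncard := by
                    rw [Set.ncard_insert_of_notMem hb1 (Set.toFinite _)]
            · intro x hx
              rcases hx with rfl | hx
              · apply ncard_le_one_of_subset_singleton (x := c)
                rw [hNb]
                rintro y ⟨(rfl | rfl), hy⟩
                · rcases hy with rfl | hy
                  · exact absurd rfl hvb2
                  · exact absurd rfl hy.2
                · rfl
              · obtain ⟨hxS, hxv⟩ := hx
                rw [Set.mem_singleton_iff] at hxv
                by_cases hxc : x = c
                · subst hxc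
                  apply ncard_le_one_of_subset_singleton (x := b)
                  rw [hNc]
                  rintro y ⟨(rfl | rfl), hy⟩
                  · rfl
                  · rcases hy with rfl | hy
                    · exact absurd rfl hbd
                    · exact absurd ⟨hxS, hy.1⟩ hcd3
                · refine le_trans (Set.ncard_le_ncard ?_ (Set.toFinite _)) (hS.2 x hxS)
                  rintro y ⟨hy1, hy2⟩
                  refine ⟨hy1, ?_⟩
                  rcases hy2 with rfl | hy2
                  · rw [SimpleGraph.mem_neighborSet, T'.adj_comm,
                      ← SimpleGraph.mem_neighborSet, hNb] at hy1
                    rcases hy1 with rfl | rfl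
                    · exact absurd rfl hxv
                    · exact absurd rfl hxc
                  · exact hy2.1
        · -- case B : v ∈ S, a ∉ S
          refine ⟨insert a (S \ {v}), ?_, ?_, ?_⟩
          · intro hmem
            rcases Set.mem_insert_iff.1 hmem with h | hmem
            · exact hav h.symm
            · exact hmem.2 rfl

          · have h1 : 0 < S.ncard := (Set.ncard_pos (Set.toFinite S)).2 ⟨v, hvS⟩
            have ha1 : a ∉ S \ {v} := fun h => haS h.1
            apply le_of_eq
            calc S.ncard = S.ncard - 1 + 1 := by omega
              _ = (S \ {v}).ncard + 1 := by rw [Set.ncard_diff_singleton_of_mem hvS]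
              _ = (insert a (S \ {v})).ncard := by
                  rw [Set.ncard_insert_of_notMem ha1 (Set.toFinite _)]
          · intro x hx
            rcases hx with rfl | hx
            · apply ncard_le_one_of_subset_singleton (x := v)
              rw [hNa]
              exact Set.inter_subset_left
            · obtain ⟨hxS, hxv⟩ := hx
              rw [Set.mem_singleton_iff] at hxv
              refine le_trans (Set.ncard_le_ncard ?_ (Set.toFinite _)) (hS.2 x hxS)
              rintro y ⟨hy1, hy2⟩
              refine ⟨hy1, ?_⟩
              rcases hy2 with rfl | hy2
              · rw [SimpleGraph.mem_neighborSet, T'.adj_comm,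
                  ← SimpleGraph.mem_neighborSet, hNa] at hy1
                rw [Set.mem_singleton_iff] at hy1
                exact absurd hy1 hxv
              · exact hy2.1
      · -- case A : v ∉ S
        exact ⟨S, hvS, le_rfl, fun x hx => hS.2 x hx⟩
    obtain ⟨base, hvbase, hcard, hind⟩ := hmain
    have hindT : IsKIndOn T 2 Set.univ (Sum.inl '' base ∪ {Sum.inr ()}) := by
      refine ⟨Set.subset_univ _, ?_⟩
      rintro w hw
      rcases hw with ⟨x, hx, rfl⟩ | hw
      · have hxv : x ≠ v := fun h => hvbase (h ▸ hx)
        rw [hkey x hxv, hpre base]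
        exact hind x hx
      · rw [Set.mem_singleton_iff] at hw
        subst hw
        exact hindu _
    have h1 := le_alphaK' T hindT
    rw [hcard1 base] at h1
    omega
  -- α(T) ≤ α(T') + 1
  have hab2 : alphaK T 2 Set.univ ≤ alphaK T' 2 Set.univ + 1 := by
    obtain ⟨S, hS, hc⟩ := alphaK_exists T
    set P : Set V := Sum.inl ⁻¹' S with hP
    have hindP : IsKIndOn T' 2 Set.univ P := by
      refine ⟨Set.subset_univ _, ?_⟩
      intro x hx
      refine le_trans (hmono x P S (Set.image_preimage_subset _ _)) ?_
      exact hS.2 (Sum.inl x) hx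
    have h1 := le_alphaK' T' hindP
    have h2 : S.ncard ≤ P.ncard + 1 := by
      have hsub : S ⊆ Sum.inl '' P ∪ {Sum.inr ()} := by
        rintro (x | u) hw
        · exact Or.inl ⟨x, hw, rfl⟩
        · cases u; exact Or.inr rfl
      calc S.ncard ≤ (Sum.inl '' P ∪ {Sum.inr ()} : Set (V ⊕ Unit)).ncard :=
            Set.ncard_le_ncard hsub (Set.toFinite _)
        _ = P.ncard + 1 := hcard1 P
    omega
  refine ⟨by omega, by omega, by omega⟩
end
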